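/- arXiv:1803.06417 — 2 statements merged into one kernel-verified Lean document; each statement's English description precedes it below -/
import Mathlib

section
/- For a balanced partitioning of a κ×γ all-ones protograph matrix into m+1 component matrices with γ = 2(m+1), where exactly two entries of each column are assigned to each component matrix, the minimum achievable maximum pairwise row overlap over all component matrices equals ⌈κ / C(γ,2)⌉. -/
namespace MinOverlapAux

instance instNeZeroN (m : ℕ) : NeZero (2*m+1) := ⟨by omega⟩

/-- distance of row `i` from center `a` in the round-robin matching. -/
def dist (m : ℕ) (a : ZMod (2*m+1)) (i : Fin (2*(m+1))) : ℕ :=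
  if i.val = 2*m+1 then 0
  else min (((i.val : ZMod (2*m+1)) - a).val) ((a - (i.val : ZMod (2*m+1))).val)

lemma dist_le (m : ℕ) (a : ZMod (2*m+1)) (i : Fin (2*(m+1))) : dist m a i ≤ m := by
  unfold dist
  split
  · omega
  · set x := (i.val : ZMod (2*m+1)) - a with hx
    have h2 : a - (i.val : ZMod (2*m+1)) = -x := by rw [hx]; ring
    rw [h2]
    by_cases h0 : x = 0
    · simp [h0]
    · have h1 : (-x).val = 2*m+1 - x.val := by rw [ZMod.neg_val]; simp [h0]
      have h3 : x.val < 2*m+1 := ZMod.val_lt x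
      have h4 : 0 < x.val := by
        rcases Nat.eq_zero_or_pos x.val with h | h
        · exact absurd ((ZMod.val_eq_zero x).mp h) h0
        · exact h
      omega

lemma cast_nat_inj (m : ℕ) {e e' : ℕ} (he : e < 2*m+1) (he' : e' < 2*m+1)
    (h : (e : ZMod (2*m+1)) = (e' : ZMod (2*m+1))) : e = e' := by
  have := congrArg ZMod.val h
  rwa [ZMod.val_natCast_of_lt he, ZMod.val_natCast_of_lt he'] at this

lemma two_mul_inj (m : ℕ) {x y : ZMod (2*m+1)} (h : 2*x = 2*y) : x = y := by
  have hz : 2*(x - y) = 0 := by rw [mul_sub, h, sub_self]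
  have h1 : ((2 * (x-y).val : ℕ) : ZMod (2*m+1)) = 0 := by
    push_cast
    rw [ZMod.natCast_zmod_val]
    exact hz
  have h2 : (2*m+1) ∣ 2 * (x-y).val := (ZMod.natCast_eq_zero_iff _ _).mp h1
  have hcop : Nat.Coprime (2*m+1) 2 :=
    ((Nat.prime_two.coprime_iff_not_dvd).mpr (by omega)).symm
  have h3 : (2*m+1) ∣ (x-y).val := hcop.dvd_of_dvd_mul_left h2
  have h4 : (x-y).val < 2*m+1 := ZMod.val_lt _
  have h5 : (x-y).val = 0 := Nat.eq_zero_of_dvd_of_lt h3 h4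
  have h6 : x - y = 0 := (ZMod.val_eq_zero _).mp h5
  exact sub_eq_zero.mp h6

lemma min_val_eq_iff (m : ℕ) (x : ZMod (2*m+1)) {e : ℕ} (he : e ≤ m) :
    min x.val (-x).val = e ↔ (x = (e : ZMod (2*m+1)) ∨ x = -(e : ZMod (2*m+1))) := by
  constructor
  · intro h
    by_cases h0 : x = 0
    · subst h0
      simp at h
      left
      rw [← h]
      simp
    · have hneg : (-x).val = 2*m+1 - x.val := by rw [ZMod.neg_val]; simp [h0]
      have hlt : x.val < 2*m+1 := ZMod.val_lt x
      have hpos : 0 < x.val := by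
        rcases Nat.eq_zero_or_pos x.val with h' | h'
        · exact absurd ((ZMod.val_eq_zero x).mp h') h0
        · exact h'
      rcases le_total x.val ((-x).val) with hle | hle
      · left
        rw [min_eq_left hle] at h
        rw [← h, ZMod.natCast_zmod_val]
      · right
        rw [min_eq_right hle] at h
        have : -x = (e : ZMod (2*m+1)) := by rw [← h, ZMod.natCast_zmod_val]
        rw [← this]; ring
  · intro h
    by_cases he0 : e = 0
    · subst he0
      have hx0 : x = 0 := by rcases h with h | h <;> simp [h]
      simp [hx0]
    · have hcastval : ((e : ZMod (2*m+1))).val = e := ZMod.val_natCast_of_lt (by omega)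
      have hcastne : (e : ZMod (2*m+1)) ≠ 0 := by
        intro hc
        rw [hc, ZMod.val_zero] at hcastval
        omega
      have hnegval : (-(e : ZMod (2*m+1))).val = 2*m+1 - e := by
        rw [ZMod.neg_val]; simp [hcastne, hcastval]
      rcases h with h | h
      · rw [h, hcastval, hnegval]
        exact min_eq_left (by omega)
      · rw [h, neg_neg, hnegval, hcastval]
        exact min_eq_right (by omega)

lemma dist_eq_iff (m : ℕ) (a : ZMod (2*m+1)) (i : Fin (2*(m+1))) (hi : i.val ≠ 2*m+1)
    {e : ℕ} (he : e ≤ m) :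
    dist m a i = e ↔
      ((i.val : ZMod (2*m+1)) = a + e ∨ (i.val : ZMod (2*m+1)) = a - e) := by
  have hneg : a - (i.val : ZMod (2*m+1)) = -((i.val : ZMod (2*m+1)) - a) := by ring
  rw [dist, if_neg hi, hneg, min_val_eq_iff m _ he, sub_eq_iff_eq_add', sub_eq_iff_eq_add']
  constructor
  · rintro (h | h)
    · exact Or.inl h
    · right; rw [h]; ring
  · rintro (h | h)
    · exact Or.inl h
    · right; rw [h]; ring


/-- embed a residue as a row index -/
def embN (m : ℕ) (v : ZMod (2*m+1)) : Fin (2*(m+1)) :=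
  ⟨v.val, by have := ZMod.val_lt v; omega⟩

lemma embN_val_ne (m : ℕ) (v : ZMod (2*m+1)) : (embN m v).val ≠ 2*m+1 := by
  have := ZMod.val_lt v; simp [embN]; omega

lemma eq_embN_iff (m : ℕ) (i : Fin (2*(m+1))) (hi : i.val ≠ 2*m+1) (w : ZMod (2*m+1)) :
    i = embN m w ↔ (i.val : ZMod (2*m+1)) = w := by
  have hlt : i.val < 2*m+1 := by have := i.isLt; omega
  constructor
  · intro h
    rw [h]
    simp only [embN]
    exact ZMod.natCast_zmod_val w
  · intro h
    apply Fin.ext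
    simp only [embN]
    rw [← h, ZMod.val_natCast_of_lt hlt]

lemma card_fiber (m : ℕ) (a : ZMod (2*m+1)) {e : ℕ} (he : e ≤ m) :
    (Finset.univ.filter fun i : Fin (2*(m+1)) => dist m a i = e).card = 2 := by
  by_cases he0 : e = 0
  · subst he0
    have hset : (Finset.univ.filter fun i : Fin (2*(m+1)) => dist m a i = 0)
        = {(⟨2*m+1, by omega⟩ : Fin (2*(m+1))), embN m a} := by
      ext i
      simp only [Finset.mem_filter, Finset.mem_univ, true_and, Finset.mem_insert,
        Finset.mem_singleton]
      by_cases hi : i.val = 2*m+1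
      · constructor
        · intro _; left; exact Fin.ext hi
        · intro _; rw [dist, if_pos hi]
      · rw [dist_eq_iff m a i hi (by omega), eq_embN_iff m i hi]
        constructor
        · rintro (h | h)
          · right; rw [h]; simp
          · right; rw [h]; simp
        · rintro (h | h)
          · exact absurd (congrArg Fin.val h) hi
          · left; rw [h]; simp
    rw [hset]
    apply Finset.card_pair
    intro h
    have := congrArg Fin.val h
    simp only [embN] at this
    have := ZMod.val_lt a
    omega
  · have hset : (Finset.univ.filter fun i : Fin (2*(m+1)) => dist m a i = e)
        = {embN m (a + e), embN m (a - e)} := by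
      ext i
      simp only [Finset.mem_filter, Finset.mem_univ, true_and, Finset.mem_insert,
        Finset.mem_singleton]
      by_cases hi : i.val = 2*m+1
      · constructor
        · intro h
          rw [dist, if_pos hi] at h
          omega
        · rintro (h | h) <;>
            exact absurd (congrArg Fin.val h) (by rw [hi]; have := embN_val_ne m; simp [embN]; have := ZMod.val_lt (a + (e:ZMod (2*m+1))); have := ZMod.val_lt (a - (e:ZMod (2*m+1))); omega)
      · rw [dist_eq_iff m a i hi he, eq_embN_iff m i hi, eq_embN_iff m i hi]
    rw [hset]
    apply Finset.card_pair
    intro h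
    have h2 : a + (e : ZMod (2*m+1)) = a - e := by
      have := congrArg Fin.val h
      simp only [embN] at this
      exact ZMod.val_injective _ this
    have h3 : (2 : ZMod (2*m+1)) * e = 2 * 0 := by
      linear_combination h2
    have h4 : (e : ZMod (2*m+1)) = 0 := two_mul_inj m h3
    have h5 : ((e : ZMod (2*m+1))).val = e := ZMod.val_natCast_of_lt (by omega)
    rw [h4, ZMod.val_zero] at h5
    omega

lemma pair_det (m : ℕ) (a a' : ZMod (2*m+1)) {e e' : ℕ} (he : e ≤ m) (he' : e' ≤ m)
    (i i' : Fin (2*(m+1))) (hne : i ≠ i')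
    (h1 : dist m a i = e) (h2 : dist m a i' = e)
    (h3 : dist m a' i = e') (h4 : dist m a' i' = e') : a = a' ∧ e = e' := by
  by_cases hi : i.val = 2*m+1 <;> by_cases hi' : i'.val = 2*m+1
  · exact absurd (Fin.ext (hi.trans hi'.symm)) hne
  · -- i is the infinity row
    rw [dist, if_pos hi] at h1 h3
    subst h1; subst h3
    refine ⟨?_, rfl⟩
    rw [dist_eq_iff m a i' hi' (by omega)] at h2
    rw [dist_eq_iff m a' i' hi' (by omega)] at h4
    have hv : (i'.val : ZMod (2*m+1)) = a := by
      rcases h2 with h | h <;> (rw [h]; simp)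
    have hv' : (i'.val : ZMod (2*m+1)) = a' := by
      rcases h4 with h | h <;> (rw [h]; simp)
    rw [← hv, ← hv']
  · rw [dist, if_pos hi'] at h2 h4
    subst h2; subst h4
    refine ⟨?_, rfl⟩
    rw [dist_eq_iff m a i hi (by omega)] at h1
    rw [dist_eq_iff m a' i hi (by omega)] at h3
    have hv : (i.val : ZMod (2*m+1)) = a := by
      rcases h1 with h | h <;> (rw [h]; simp)
    have hv' : (i.val : ZMod (2*m+1)) = a' := by
      rcases h3 with h | h <;> (rw [h]; simp)
    rw [← hv, ← hv']
  · set v : ZMod (2*m+1) := (i.val : ZMod (2*m+1)) with hv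
    set v' : ZMod (2*m+1) := (i'.val : ZMod (2*m+1)) with hv'
    have hvne : v ≠ v' := by
      intro hc
      apply hne
      apply Fin.ext
      exact cast_nat_inj m (by have := i.isLt; omega) (by have := i'.isLt; omega) hc
    rw [dist_eq_iff m a i hi he] at h1
    rw [dist_eq_iff m a i' hi' he] at h2
    rw [dist_eq_iff m a' i hi he'] at h3
    rw [dist_eq_iff m a' i' hi' he'] at h4
    have hsum : (i.val : ZMod (2*m+1)) + (i'.val : ZMod (2*m+1)) = 2*a := by
      rcases h1 with h1 | h1 <;> rcases h2 with h2 | h2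
      · exact absurd (h1.trans h2.symm) hvne
      · rw [h1, h2]; ring
      · rw [h1, h2]; ring
      · exact absurd (h1.trans h2.symm) hvne
    have hsum' : (i.val : ZMod (2*m+1)) + (i'.val : ZMod (2*m+1)) = 2*a' := by
      rcases h3 with h3 | h3 <;> rcases h4 with h4 | h4
      · exact absurd (h3.trans h4.symm) hvne
      · rw [h3, h4]; ring
      · rw [h3, h4]; ring
      · exact absurd (h3.trans h4.symm) hvne
    have haa : a = a' := two_mul_inj m (hsum ▸ hsum')
    refine ⟨haa, ?_⟩
    subst haa
    -- now v = a ± e and v = a ± e'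
    have hee : (e : ZMod (2*m+1)) = e' ∨ ((e:ZMod (2*m+1)) + e' = 0) := by
      rcases h1 with h1 | h1 <;> rcases h3 with h3 | h3
      · left; have := h1.symm.trans h3; linear_combination this
      · right; have := h1.symm.trans h3; linear_combination this
      · right; have := h1.symm.trans h3; linear_combination -this
      · left; have := h1.symm.trans h3; linear_combination -this
    rcases hee with h | h
    · exact cast_nat_inj m (by omega) (by omega) h
    · have h9 : ((e + e' : ℕ) : ZMod (2*m+1)) = 0 := by push_cast; exact h
      have h10 : (2*m+1) ∣ e + e' := (ZMod.natCast_eq_zero_iff _ _).mp h9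
      have h11 : e + e' = 0 := Nat.eq_zero_of_dvd_of_lt h10 (by omega)
      omega


def bFin (m : ℕ) (c : ℕ) : Fin (m+1) := ⟨(c / (2*m+1)) % (m+1), Nat.mod_lt _ (by omega)⟩

def lab (m : ℕ) (c : ℕ) (i : Fin (2*(m+1))) : Fin (m+1) :=
  ⟨dist m (c : ZMod (2*m+1)) i, Nat.lt_succ_of_le (dist_le m _ i)⟩ + bFin m c

lemma lab_eq_iff (m c : ℕ) (i : Fin (2*(m+1))) (y : Fin (m+1)) :
    lab m c i = y ↔ dist m (c : ZMod (2*m+1)) i = (y - bFin m c).val := by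
  rw [lab, ← eq_sub_iff_add_eq, Fin.ext_iff]

lemma balanced (m κ : ℕ) (j : Fin κ) (y : Fin (m+1)) :
    (Finset.univ.filter fun i => lab m j.val i = y).card = 2 := by
  have h : (Finset.univ.filter fun i : Fin (2*(m+1)) => lab m j.val i = y)
      = Finset.univ.filter fun i => dist m (j.val : ZMod (2*m+1)) i = (y - bFin m j.val).val :=
    Finset.filter_congr (fun i _ => lab_eq_iff m j.val i y)
  rw [h]
  exact card_fiber m _ (Nat.lt_succ_iff.mp (Fin.is_lt _))

lemma lab_unique (m : ℕ) {i i' : Fin (2*(m+1))} (hne : i ≠ i') (y : Fin (m+1)) (c c' : ℕ)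
    (h1 : lab m c i = y) (h2 : lab m c i' = y)
    (h3 : lab m c' i = y) (h4 : lab m c' i' = y) :
    c % ((2*m+1)*(m+1)) = c' % ((2*m+1)*(m+1)) := by
  rw [lab_eq_iff] at h1 h2 h3 h4
  obtain ⟨haa, hee⟩ := pair_det m (c : ZMod (2*m+1)) (c' : ZMod (2*m+1))
    (Nat.lt_succ_iff.mp (Fin.is_lt _)) (Nat.lt_succ_iff.mp (Fin.is_lt _)) i i' hne h1 h2 h3 h4
  have hmod1 : c % (2*m+1) = c' % (2*m+1) := by
    have := congrArg ZMod.val haa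
    rwa [ZMod.val_natCast, ZMod.val_natCast] at this
  have hb : bFin m c = bFin m c' := by
    have h5 : y - bFin m c = y - bFin m c' := Fin.ext hee
    exact sub_right_injective h5
  have hmod2 : (c / (2*m+1)) % (m+1) = (c' / (2*m+1)) % (m+1) := congrArg Fin.val hb
  rw [Nat.mod_mul, Nat.mod_mul, hmod1, hmod2]

lemma count_res_le (D κ c : ℕ) (hD : 0 < D) (hκ : 0 < κ) :
    (Finset.univ.filter fun j : Fin κ => j.val % D = c).card ≤ (κ - 1)/D + 1 := by
  have h : (Finset.univ.filter fun j : Fin κ => j.val % D = c).card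
      ≤ (Finset.range ((κ-1)/D + 1)).card := by
    apply Finset.card_le_card_of_injOn (fun j : Fin κ => j.val / D)
    · intro j hj
      simp only [Finset.mem_coe, Finset.mem_range]
      have := j.isLt
      exact Nat.lt_succ_of_le (Nat.div_le_div_right (c := D) (by omega : j.val ≤ κ - 1))
    · intro j1 hj1 j2 hj2 hh
      simp only [Finset.coe_filter, Set.mem_setOf_eq, Finset.mem_univ, true_and] at hj1 hj2
      have hh2 : j1.val / D = j2.val / D := hh
      apply Fin.ext
      rw [← Nat.div_add_mod j1.val D, ← Nat.div_add_mod j2.val D, hh2, hj1, hj2]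
  rwa [Finset.card_range] at h

lemma count_res_zero (D κ : ℕ) (hD : 0 < D) (hκ : 0 < κ) :
    (Finset.univ.filter fun j : Fin κ => j.val % D = 0).card = (κ - 1)/D + 1 := by
  have h := Finset.card_bij (s := Finset.univ.filter fun j : Fin κ => j.val % D = 0)
    (t := Finset.range ((κ-1)/D + 1))
    (fun j _ => j.val / D)
    (fun j hj => by
      simp only [Finset.mem_range]
      have := j.isLt
      exact Nat.lt_succ_of_le (Nat.div_le_div_right (by omega)))
    (fun j1 hj1 j2 hj2 hh => by
      simp only [Finset.mem_filter, Finset.mem_univ, true_and] at hj1 hj2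
      have hh2 : j1.val / D = j2.val / D := hh
      apply Fin.ext
      rw [← Nat.div_add_mod j1.val D, ← Nat.div_add_mod j2.val D, hh2, hj1, hj2])
    (fun q hq => by
      simp only [Finset.mem_range] at hq
      have hqD : q * D < κ := by
        have h1 : q ≤ (κ-1)/D := Nat.lt_succ_iff.mp hq
        have h2 : ((κ-1)/D) * D ≤ κ - 1 := Nat.div_mul_le_self _ _
        have h3 : q * D ≤ ((κ-1)/D) * D := Nat.mul_le_mul_right D h1
        exact Nat.lt_of_le_of_lt (h3.trans h2) (Nat.sub_lt hκ Nat.one_pos)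
      refine ⟨⟨q*D, hqD⟩, ?_, ?_⟩
      · simp [Nat.mul_mod_left]
      · simp [Nat.mul_div_cancel _ hD])
  rw [h, Finset.card_range]

lemma overlap_le (m κ : ℕ) (hκ : 0 < κ) {i i' : Fin (2*(m+1))} (hne : i ≠ i') (y : Fin (m+1)) :
    (Finset.univ.filter fun j : Fin κ => lab m j.val i = y ∧ lab m j.val i' = y).card
      ≤ (κ - 1)/((2*m+1)*(m+1)) + 1 := by
  have hD : 0 < (2*m+1)*(m+1) := Nat.mul_pos (by omega) (by omega)
  rcases Finset.eq_empty_or_nonempty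
      (Finset.univ.filter fun j : Fin κ => lab m j.val i = y ∧ lab m j.val i' = y) with he | ⟨j0, hj0⟩
  · rw [he]; simp
  · simp only [Finset.mem_filter, Finset.mem_univ, true_and] at hj0
    have hsub : (Finset.univ.filter fun j : Fin κ => lab m j.val i = y ∧ lab m j.val i' = y)
        ⊆ Finset.univ.filter fun j : Fin κ => j.val % ((2*m+1)*(m+1)) = j0.val % ((2*m+1)*(m+1)) := by
      intro j hj
      simp only [Finset.mem_filter, Finset.mem_univ, true_and] at hj ⊢
      exact lab_unique m hne y j.val j0.val hj.1 hj.2 hj0.1 hj0.2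
    exact le_trans (Finset.card_le_card hsub) (count_res_le _ _ _ hD hκ)

lemma lab_zero (m : ℕ) {c : ℕ} (hc : c % ((2*m+1)*(m+1)) = 0) :
    lab m c ⟨2*m+1, by omega⟩ = 0 ∧ lab m c ⟨0, by omega⟩ = 0 := by
  have hdvd : ((2*m+1)*(m+1)) ∣ c := Nat.dvd_of_mod_eq_zero hc
  obtain ⟨t, ht⟩ := hdvd
  have ha : (c : ZMod (2*m+1)) = 0 := by
    rw [ZMod.natCast_eq_zero_iff]
    exact Dvd.dvd.trans ⟨m+1, rfl⟩ (Nat.dvd_of_mod_eq_zero hc)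
  have hb : bFin m c = 0 := by
    apply Fin.ext
    have : c / (2*m+1) = (m+1) * t := by
      rw [ht, mul_assoc, Nat.mul_div_cancel_left _ (show 0 < 2*m+1 by omega)]
    simp [bFin, this, Nat.mul_mod_right]
  constructor
  · rw [lab_eq_iff, hb, sub_zero, dist, if_pos rfl]
    simp
  · rw [lab_eq_iff, hb, sub_zero]
    rw [dist, if_neg (by simp)]
    simp [ha]

lemma overlap_witness (m κ : ℕ) (hκ : 0 < κ) :
    (Finset.univ.filter fun j : Fin κ =>
        lab m j.val ⟨2*m+1, by omega⟩ = 0 ∧ lab m j.val ⟨0, by omega⟩ = 0).card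
      = (κ - 1)/((2*m+1)*(m+1)) + 1 := by
  have hD : 0 < (2*m+1)*(m+1) := Nat.mul_pos (by omega) (by omega)
  have hset : (Finset.univ.filter fun j : Fin κ =>
        lab m j.val ⟨2*m+1, by omega⟩ = 0 ∧ lab m j.val ⟨0, by omega⟩ = 0)
      = Finset.univ.filter fun j : Fin κ => j.val % ((2*m+1)*(m+1)) = 0 := by
    ext j
    simp only [Finset.mem_filter, Finset.mem_univ, true_and]
    constructor
    · intro ⟨h1, h2⟩
      have h0 := lab_zero m (c := 0) (by simp)
      have := lab_unique m (i := ⟨2*m+1, by omega⟩) (i' := ⟨0, by omega⟩)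
        (by simp only [ne_eq, Fin.mk.injEq]; omega) 0 j.val 0
        h1 h2 h0.1 h0.2
      simpa using this
    · intro h
      exact lab_zero m h
  rw [hset]
  exact count_res_zero _ _ hD hκ

end MinOverlapAux

/-- The maximum pairwise row overlap over all component matrices of a partitioning
`P` (entry `(i,j)` of the all-ones `γ×κ` protograph matrix gets label `P i j`). -/
def maxOverlap (γ κ M : ℕ) (P : Fin γ → Fin κ → Fin M) : ℕ :=
  Finset.univ.sup fun y : Fin M =>
    Finset.univ.sup fun i : Fin γ =>
      Finset.univ.sup fun i' : Fin γ =>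
        if i ≠ i' then
          (Finset.univ.filter fun j : Fin κ => P i j = y ∧ P i' j = y).card
        else 0

namespace MinOverlapAux

lemma maxOverlap_P (m κ : ℕ) (hκ : 0 < κ) :
    maxOverlap (2*(m+1)) κ (m+1) (fun i j => lab m j.val i)
      = (κ - 1)/((2*m+1)*(m+1)) + 1 := by
  apply le_antisymm
  · apply Finset.sup_le; intro y _
    apply Finset.sup_le; intro i _
    apply Finset.sup_le; intro i' _
    by_cases h : i ≠ i'
    · rw [if_pos h]; exact overlap_le m κ hκ h y
    · rw [if_neg h]; exact Nat.zero_le _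
  · have hne : (⟨2*m+1, by omega⟩ : Fin (2*(m+1))) ≠ ⟨0, by omega⟩ := by
      simp only [ne_eq, Fin.mk.injEq]; omega
    rw [← overlap_witness m κ hκ]
    refine le_trans ?_ (Finset.le_sup (f := fun y : Fin (m+1) =>
      Finset.univ.sup fun i : Fin (2*(m+1)) =>
        Finset.univ.sup fun i' : Fin (2*(m+1)) =>
          if i ≠ i' then
            (Finset.univ.filter fun j : Fin κ =>
              lab m j.val i = y ∧ lab m j.val i' = y).card
          else 0) (Finset.mem_univ (0 : Fin (m+1))))
    refine le_trans ?_ (Finset.le_sup (f := fun i : Fin (2*(m+1)) =>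
      Finset.univ.sup fun i' : Fin (2*(m+1)) =>
        if i ≠ i' then
          (Finset.univ.filter fun j : Fin κ =>
            lab m j.val i = (0 : Fin (m+1)) ∧ lab m j.val i' = (0 : Fin (m+1))).card
        else 0) (Finset.mem_univ (⟨2*m+1, by omega⟩ : Fin (2*(m+1)))))
    refine le_trans ?_ (Finset.le_sup (f := fun i' : Fin (2*(m+1)) =>
      if (⟨2*m+1, by omega⟩ : Fin (2*(m+1))) ≠ i' then
        (Finset.univ.filter fun j : Fin κ =>
          lab m j.val ⟨2*m+1, by omega⟩ = (0 : Fin (m+1)) ∧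
          lab m j.val i' = (0 : Fin (m+1))).card
      else 0) (Finset.mem_univ (⟨0, by omega⟩ : Fin (2*(m+1)))))
    beta_reduce
    rw [if_pos hne]

lemma lower_bound (m κ : ℕ) (P : Fin (2*(m+1)) → Fin κ → Fin (m+1))
    (hbal : ∀ (j : Fin κ) (y : Fin (m+1)),
      (Finset.univ.filter fun i => P i j = y).card = 2) :
    κ ≤ maxOverlap (2*(m+1)) κ (m+1) P * ((2*m+1)*(m+1)) := by
  set M := maxOverlap (2*(m+1)) κ (m+1) P with hM
  -- the double-counted sum
  have hin : ∀ (j : Fin κ) (y : Fin (m+1)),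
      (∑ i : Fin (2*(m+1)), ∑ i' : Fin (2*(m+1)),
        if i ≠ i' ∧ P i j = y ∧ P i' j = y then 1 else 0) = 2 := by
    intro j y
    set F := Finset.univ.filter fun i => P i j = y with hF
    have hFc : F.card = 2 := hbal j y
    have step : ∀ i : Fin (2*(m+1)),
        (∑ i' : Fin (2*(m+1)), if i ≠ i' ∧ P i j = y ∧ P i' j = y then 1 else 0)
          = if P i j = y then (∑ i' ∈ F, if i ≠ i' then 1 else 0) else 0 := by
      intro i
      by_cases hp : P i j = y
      · rw [if_pos hp, hF, Finset.sum_filter]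
        apply Finset.sum_congr rfl
        intro i' _
        by_cases h1 : P i' j = y <;> by_cases h2 : i = i' <;> simp [hp, h1, h2]
      · rw [if_neg hp]
        apply Finset.sum_eq_zero
        intro i' _
        simp [hp]
    calc (∑ i : Fin (2*(m+1)), ∑ i' : Fin (2*(m+1)),
            if i ≠ i' ∧ P i j = y ∧ P i' j = y then 1 else 0)
        = ∑ i : Fin (2*(m+1)),
            if P i j = y then (∑ i' ∈ F, if i ≠ i' then 1 else 0) else 0 :=
          Finset.sum_congr rfl fun i _ => step i
      _ = ∑ i ∈ F, (∑ i' ∈ F, if i ≠ i' then 1 else 0) := by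
          rw [hF, Finset.sum_filter]
      _ = ∑ i ∈ F, (F.erase i).card := by
          apply Finset.sum_congr rfl
          intro i _
          rw [← Finset.filter_ne F i, Finset.card_filter]
      _ = ∑ i ∈ F, 1 := by
          apply Finset.sum_congr rfl
          intro i hi
          rw [Finset.card_erase_of_mem hi, hFc]
      _ = 2 := by rw [Finset.sum_const, hFc, smul_eq_mul, mul_one]
  have key : ∀ (y : Fin (m+1)) (i i' : Fin (2*(m+1))),
      (if i ≠ i' then
        (Finset.univ.filter fun j : Fin κ => P i j = y ∧ P i' j = y).card else 0) ≤ M := by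
    intro y i i'
    refine le_trans (Finset.le_sup (f := fun i' : Fin (2*(m+1)) =>
      if i ≠ i' then
        (Finset.univ.filter fun j : Fin κ => P i j = y ∧ P i' j = y).card else 0)
      (Finset.mem_univ i')) ?_
    refine le_trans (Finset.le_sup (f := fun i : Fin (2*(m+1)) =>
      Finset.univ.sup fun i' : Fin (2*(m+1)) =>
        if i ≠ i' then
          (Finset.univ.filter fun j : Fin κ => P i j = y ∧ P i' j = y).card else 0)
      (Finset.mem_univ i)) ?_
    exact Finset.le_sup (f := fun y : Fin (m+1) =>
      Finset.univ.sup fun i : Fin (2*(m+1)) =>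
        Finset.univ.sup fun i' : Fin (2*(m+1)) =>
          if i ≠ i' then
            (Finset.univ.filter fun j : Fin κ => P i j = y ∧ P i' j = y).card else 0)
      (Finset.mem_univ y)
  -- compute the total sum two ways
  have hS : (∑ y : Fin (m+1), ∑ i : Fin (2*(m+1)), ∑ i' : Fin (2*(m+1)),
      if i ≠ i' then
        (Finset.univ.filter fun j : Fin κ => P i j = y ∧ P i' j = y).card else 0)
      = κ * (2*(m+1)) := by
    have h1 : ∀ (y : Fin (m+1)) (i i' : Fin (2*(m+1))),
        (if i ≠ i' then
          (Finset.univ.filter fun j : Fin κ => P i j = y ∧ P i' j = y).card else 0)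
        = ∑ j : Fin κ, if i ≠ i' ∧ P i j = y ∧ P i' j = y then 1 else 0 := by
      intro y i i'
      by_cases h : i ≠ i'
      · rw [if_pos h, Finset.card_filter]
        apply Finset.sum_congr rfl
        intro j _
        simp [h]
      · rw [if_neg h]
        symm
        apply Finset.sum_eq_zero
        intro j _
        simp [h]
    calc (∑ y : Fin (m+1), ∑ i : Fin (2*(m+1)), ∑ i' : Fin (2*(m+1)),
          if i ≠ i' then
            (Finset.univ.filter fun j : Fin κ => P i j = y ∧ P i' j = y).card else 0)
        = ∑ y : Fin (m+1), ∑ i : Fin (2*(m+1)), ∑ i' : Fin (2*(m+1)), ∑ j : Fin κ,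
            if i ≠ i' ∧ P i j = y ∧ P i' j = y then 1 else 0 := by
          exact Finset.sum_congr rfl fun y _ => Finset.sum_congr rfl fun i _ =>
            Finset.sum_congr rfl fun i' _ => h1 y i i'
      _ = ∑ y : Fin (m+1), ∑ i : Fin (2*(m+1)), ∑ j : Fin κ, ∑ i' : Fin (2*(m+1)),
            if i ≠ i' ∧ P i j = y ∧ P i' j = y then 1 else 0 :=
          Finset.sum_congr rfl fun y _ => Finset.sum_congr rfl fun i _ => Finset.sum_comm
      _ = ∑ y : Fin (m+1), ∑ j : Fin κ, ∑ i : Fin (2*(m+1)), ∑ i' : Fin (2*(m+1)),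
            if i ≠ i' ∧ P i j = y ∧ P i' j = y then 1 else 0 :=
          Finset.sum_congr rfl fun y _ => Finset.sum_comm
      _ = ∑ j : Fin κ, ∑ y : Fin (m+1), ∑ i : Fin (2*(m+1)), ∑ i' : Fin (2*(m+1)),
            if i ≠ i' ∧ P i j = y ∧ P i' j = y then 1 else 0 := Finset.sum_comm
      _ = ∑ j : Fin κ, ∑ y : Fin (m+1), 2 :=
          Finset.sum_congr rfl fun j _ => Finset.sum_congr rfl fun y _ => hin j y
      _ = κ * (2*(m+1)) := by
          simp only [Finset.sum_const, Finset.card_univ, Fintype.card_fin, smul_eq_mul]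
          all_goals ring
  have hS2 : (∑ y : Fin (m+1), ∑ i : Fin (2*(m+1)), ∑ i' : Fin (2*(m+1)),
      if i ≠ i' then
        (Finset.univ.filter fun j : Fin κ => P i j = y ∧ P i' j = y).card else 0)
      ≤ (m+1) * ((2*(m+1)) * ((2*(m+1)-1) * M)) := by
    have hinner : ∀ (y : Fin (m+1)) (i : Fin (2*(m+1))),
        (∑ i' : Fin (2*(m+1)),
          if i ≠ i' then
            (Finset.univ.filter fun j : Fin κ => P i j = y ∧ P i' j = y).card else 0)
        ≤ (2*(m+1)-1) * M := by
      intro y i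
      have hb : ∀ i' : Fin (2*(m+1)),
          (if i ≠ i' then
            (Finset.univ.filter fun j : Fin κ => P i j = y ∧ P i' j = y).card else 0)
          ≤ if i ≠ i' then M else 0 := by
        intro i'
        by_cases h : i ≠ i'
        · rw [if_pos h, if_pos h]
          have := key y i i'
          rwa [if_pos h] at this
        · rw [if_neg h, if_neg h]
      refine le_trans (Finset.sum_le_sum fun i' _ => hb i') ?_
      rw [← Finset.sum_filter (fun i' : Fin (2*(m+1)) => i ≠ i') (fun _ => M),
          Finset.filter_ne, Finset.sum_const, smul_eq_mul,
          Finset.card_erase_of_mem (Finset.mem_univ i), Finset.card_univ, Fintype.card_fin]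
    calc (∑ y : Fin (m+1), ∑ i : Fin (2*(m+1)), ∑ i' : Fin (2*(m+1)),
          if i ≠ i' then
            (Finset.univ.filter fun j : Fin κ => P i j = y ∧ P i' j = y).card else 0)
        ≤ ∑ _y : Fin (m+1), ∑ _i : Fin (2*(m+1)), (2*(m+1)-1) * M :=
          Finset.sum_le_sum fun y _ => Finset.sum_le_sum fun i _ => hinner y i
      _ = (m+1) * ((2*(m+1)) * ((2*(m+1)-1) * M)) := by
          simp only [Finset.sum_const, Finset.card_univ, Fintype.card_fin, smul_eq_mul]
          all_goals ring
  have hA : (m+1) * ((2*(m+1)) * ((2*(m+1)-1) * M)) = (M * ((2*m+1)*(m+1))) * (2*(m+1)) := by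
    have h21 : 2*(m+1)-1 = 2*m+1 := by omega
    rw [h21]; ring
  have hfinal : κ * (2*(m+1)) ≤ (M * ((2*m+1)*(m+1))) * (2*(m+1)) := by
    calc κ * (2*(m+1)) = _ := hS.symm
      _ ≤ _ := hS2
      _ = _ := hA
  exact Nat.le_of_mul_le_mul_right hfinal (by omega)

end MinOverlapAux

/-- for balanced partitionings (exactly two entries of each column per
label) of a `2(m+1) × κ` all-ones protograph matrix into `m+1` component matrices,
the minimum achievable maximum pairwise row overlap is `⌈κ / C(γ,2)⌉`. -/
theorem min_overlap_balanced (m κ : ℕ) (hκ : 0 < κ) :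
    IsLeast
      { t : ℕ | ∃ P : Fin (2 * (m + 1)) → Fin κ → Fin (m + 1),
          (∀ (j : Fin κ) (y : Fin (m + 1)),
            (Finset.univ.filter fun i => P i j = y).card = 2) ∧
          t = maxOverlap (2 * (m + 1)) κ (m + 1) P }
      ((κ + (2 * (m + 1)).choose 2 - 1) / (2 * (m + 1)).choose 2) := by
  have hC : (2*(m+1)).choose 2 = (2*m+1)*(m+1) := by
    have h1 : 2*(m+1)-1 = 2*m+1 := by omega
    rw [Nat.choose_two_right, h1,
      show 2*(m+1)*(2*m+1) = 2*((2*m+1)*(m+1)) by ring,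
      Nat.mul_div_cancel_left _ (by norm_num : (0:ℕ) < 2)]
  have hD : 0 < (2*m+1)*(m+1) := Nat.mul_pos (by omega) (by omega)
  have hT : (κ + (2*m+1)*(m+1) - 1)/((2*m+1)*(m+1)) = (κ-1)/((2*m+1)*(m+1)) + 1 := by
    rw [show κ + (2*m+1)*(m+1) - 1 = (κ-1) + (2*m+1)*(m+1) by omega,
      Nat.add_div_right _ hD]
  constructor
  · refine ⟨fun i j => MinOverlapAux.lab m j.val i,
      fun j y => MinOverlapAux.balanced m κ j y, ?_⟩
    rw [hC, hT, MinOverlapAux.maxOverlap_P m κ hκ]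
  · rintro t ⟨P, hbal, rfl⟩
    rw [hC, Nat.div_le_iff_le_mul_add_pred hD]
    have hle := MinOverlapAux.lower_bound m κ P hbal
    have hcomm : maxOverlap (2*(m+1)) κ (m+1) P * ((2*m+1)*(m+1))
        = ((2*m+1)*(m+1)) * maxOverlap (2*(m+1)) κ (m+1) P := Nat.mul_comm _ _
    omega
end

section
/- In a (3,3) absorbing set in a Tanner graph with variable-node degree γ = 3, the induced subgraph on the 3 variable nodes contains 3 check nodes of degree 2 (forming a 6-cycle) and 3 check nodes of degree 1, and each variable node is connected to exactly 2 even-degree (degree-2) check nodes and 1 odd-degree check node. -/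
variable {VN CN : Type} [Fintype CN] [DecidableEq CN]

/-- Degree of check node `c` in the subgraph induced by the variable-node set `V`
of a Tanner graph with neighborhood map `N`. -/
def indDeg (V : Finset VN) (N : VN → Finset CN) (c : CN) : ℕ :=
  (V.filter fun v => c ∈ N v).card

/-- The even-degree check nodes `E` connected to `V`. -/
def evenCNs (V : Finset VN) (N : VN → Finset CN) : Finset CN :=
  Finset.univ.filter fun c => indDeg V N c ≠ 0 ∧ Even (indDeg V N c)

/-- The odd-degree check nodes `O` connected to `V`. -/
def oddCNs (V : Finset VN) (N : VN → Finset CN) : Finset CN :=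
  Finset.univ.filter fun c => Odd (indDeg V N c)

lemma double_count (V : Finset VN) (S : Finset CN) (N : VN → Finset CN) :
    ∑ c ∈ S, indDeg V N c = ∑ v ∈ V, (N v ∩ S).card := by
  classical
  unfold indDeg
  simp only [Finset.card_filter]
  rw [Finset.sum_comm]
  refine Finset.sum_congr rfl fun v _ => ?_
  rw [← Finset.card_filter]
  congr 1
  ext c
  simp [Finset.mem_inter, and_comm]

/-- in a `(3,3)` absorbing set with variable-node degree `γ = 3`,
each VN is connected to exactly 2 check nodes in `E` and 1 in `O`, `|E| = 3`, each
CN in `E` has induced degree 2, and the VNs together with the `E`-checks form a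
6-cycle: each pair of distinct VNs shares exactly one check in `E`. -/
theorem three_three_absorbing_set_structure
    (V : Finset VN) (N : VN → Finset CN)
    (hV : V.card = 3) (hdeg : ∀ v ∈ V, (N v).card = 3)
    (hO : (oddCNs V N).card = 3)
    (hAS : ∀ v ∈ V, ((N v) ∩ oddCNs V N).card < ((N v) ∩ evenCNs V N).card) :
    (∀ v ∈ V, ((N v) ∩ evenCNs V N).card = 2 ∧ ((N v) ∩ oddCNs V N).card = 1) ∧
    (evenCNs V N).card = 3 ∧
    (∀ c ∈ evenCNs V N, indDeg V N c = 2) ∧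
    (∀ v ∈ V, ∀ w ∈ V, v ≠ w →
      ∃! c : CN, c ∈ evenCNs V N ∧ c ∈ N v ∧ c ∈ N w) := by
  classical
  set E := evenCNs V N with hEdef
  set O := oddCNs V N with hOdef
  -- basic degree bound
  have hdle : ∀ c : CN, indDeg V N c ≤ 3 := fun c => by
    calc indDeg V N c ≤ V.card := Finset.card_filter_le _ _
      _ = 3 := hV
  have hmemE : ∀ c : CN, c ∈ E ↔ indDeg V N c ≠ 0 ∧ Even (indDeg V N c) := by
    intro c; simp [hEdef, evenCNs]
  have hmemO : ∀ c : CN, c ∈ O ↔ Odd (indDeg V N c) := by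
    intro c; simp [hOdef, oddCNs]
  -- split of N v into E and O parts
  have hsplit : ∀ v ∈ V, (N v ∩ E).card + (N v ∩ O).card = 3 := by
    intro v hv
    have hdisj : Disjoint (N v ∩ E) (N v ∩ O) := by
      rw [Finset.disjoint_left]
      intro c hcE hcO
      have h1 := (hmemE c).mp (Finset.mem_inter.mp hcE).2
      have h2 := (hmemO c).mp (Finset.mem_inter.mp hcO).2
      exact (Nat.not_odd_iff_even.mpr h1.2) h2
    have hunion : (N v ∩ E) ∪ (N v ∩ O) = N v := by
      ext c
      simp only [Finset.mem_union, Finset.mem_inter, hmemE, hmemO]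
      constructor
      · rintro (⟨h, _⟩ | ⟨h, _⟩) <;> exact h
      · intro hc
        have hne : indDeg V N c ≠ 0 := by
          have : v ∈ V.filter fun t => c ∈ N t := Finset.mem_filter.mpr ⟨hv, hc⟩
          unfold indDeg
          exact Finset.card_ne_zero_of_mem this
        rcases Nat.even_or_odd (indDeg V N c) with h | h
        · exact Or.inl ⟨hc, hne, h⟩
        · exact Or.inr ⟨hc, h⟩
    rw [← Finset.card_union_of_disjoint hdisj, hunion, hdeg v hv]
  -- each v meets O at most once
  have hvO_le : ∀ v ∈ V, (N v ∩ O).card ≤ 1 := by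
    intro v hv
    have h1 := hAS v hv
    have h2 := hsplit v hv
    omega
  -- sum over O of degrees ≥ 3
  have h3le : 3 ≤ ∑ c ∈ O, indDeg V N c := by
    have : ∀ c ∈ O, 1 ≤ indDeg V N c := by
      intro c hc
      obtain ⟨k, hk⟩ := (hmemO c).mp hc
      omega
    calc (3 : ℕ) = ∑ _c ∈ O, 1 := by rw [Finset.sum_const, hO]; simp
      _ ≤ ∑ c ∈ O, indDeg V N c := Finset.sum_le_sum this
  have hsum_O : ∑ v ∈ V, (N v ∩ O).card = ∑ c ∈ O, indDeg V N c :=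
    (double_count V O N).symm
  -- each v meets O exactly once
  have hvO : ∀ v ∈ V, (N v ∩ O).card = 1 := by
    intro v hv
    by_contra h
    have h0 : (N v ∩ O).card = 0 := by have := hvO_le v hv; omega
    have hle2 : ∑ w ∈ V, (N w ∩ O).card ≤ 2 := by
      rw [← Finset.sum_erase_add _ _ hv, h0]
      have : ∑ w ∈ V.erase v, (N w ∩ O).card ≤ ∑ _w ∈ V.erase v, 1 :=
        Finset.sum_le_sum fun w hw => hvO_le w (Finset.mem_of_mem_erase hw)
      have hcard : (V.erase v).card = 2 := by rw [Finset.card_erase_of_mem hv, hV]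
      simp only [Finset.sum_const, smul_eq_mul, mul_one] at this
      omega
    omega
  have hvE : ∀ v ∈ V, (N v ∩ E).card = 2 := by
    intro v hv
    have := hsplit v hv
    have := hvO v hv
    omega
  -- every CN in E has induced degree 2
  have hEdeg : ∀ c ∈ E, indDeg V N c = 2 := by
    intro c hc
    obtain ⟨hne, k, hk⟩ := (hmemE c).mp hc
    have := hdle c
    omega
  -- |E| = 3
  have hEcard : E.card = 3 := by
    have h6 : ∑ c ∈ E, indDeg V N c = 6 := by
      rw [double_count V E N]
      calc ∑ v ∈ V, (N v ∩ E).card = ∑ _v ∈ V, 2 :=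
            Finset.sum_congr rfl fun v hv => hvE v hv
        _ = 6 := by rw [Finset.sum_const, hV]; rfl
    have h2E : ∑ c ∈ E, indDeg V N c = 2 * E.card := by
      calc ∑ c ∈ E, indDeg V N c = ∑ _c ∈ E, 2 := Finset.sum_congr rfl hEdeg
        _ = 2 * E.card := by rw [Finset.sum_const]; ring
    omega
  -- pair-sharing counts
  set p : VN → VN → ℕ := fun v w => (E.filter fun c => c ∈ N v ∧ c ∈ N w).card with hp
  have psymm : ∀ v w, p v w = p w v := by
    intro v w
    simp only [hp]
    congr 1
    ext c
    simp [and_comm]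
  have key : ∀ v ∈ V, ∀ w ∈ V, ∀ u ∈ V, v ≠ w → v ≠ u → w ≠ u →
      p v w + p v u = 2 := by
    intro v hv w hw u hu hvw hvu hwu
    have hVeq : V = {v, w, u} := by
      have hsub : ({v, w, u} : Finset VN) ⊆ V := by
        intro t ht
        simp only [Finset.mem_insert, Finset.mem_singleton] at ht
        rcases ht with rfl | rfl | rfl <;> assumption
      have hcard : ({v, w, u} : Finset VN).card = 3 := by
        rw [Finset.card_insert_of_notMem (by simp [hvw, hvu]),
          Finset.card_insert_of_notMem (by simp [hwu]), Finset.card_singleton]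
      exact (Finset.eq_of_subset_of_card_le hsub (by omega)).symm
    set T := N v ∩ E with hT
    have hTcard : T.card = 2 := hvE v hv
    -- each c in T is adjacent to exactly one of w, u
    have hxor : ∀ c ∈ T, (c ∈ N w ∧ c ∉ N u) ∨ (c ∉ N w ∧ c ∈ N u) := by
      intro c hc
      obtain ⟨hcv, hcE⟩ := Finset.mem_inter.mp hc
      have hd2 : indDeg V N c = 2 := hEdeg c hcE
      have : indDeg V N c =
          (if c ∈ N v then 1 else 0) + ((if c ∈ N w then 1 else 0) +
            (if c ∈ N u then 1 else 0)) := by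
        unfold indDeg
        rw [hVeq, Finset.card_filter,
          Finset.sum_insert (by simp [hvw, hvu]),
          Finset.sum_insert (by simp [hwu]), Finset.sum_singleton]
      rw [hd2, if_pos hcv] at this
      by_cases h1 : c ∈ N w <;> by_cases h2 : c ∈ N u <;> simp [h1, h2] at this ⊢
    have hfilter_eq : T.filter (fun c => c ∉ N w) = T.filter (fun c => c ∈ N u) := by
      ext c
      simp only [Finset.mem_filter]
      constructor
      · rintro ⟨hc, hnw⟩
        rcases hxor c hc with ⟨h, _⟩ | ⟨_, h⟩
        · exact absurd h hnw
        · exact ⟨hc, h⟩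
      · rintro ⟨hc, hnu⟩
        rcases hxor c hc with ⟨_, h⟩ | ⟨h, _⟩
        · exact absurd hnu h
        · exact ⟨hc, h⟩
    have hadd : (T.filter (fun c => c ∈ N w)).card +
        (T.filter (fun c => c ∉ N w)).card = 2 := by
      rw [Finset.card_filter_add_card_filter_not, hTcard]
    have hpw : p v w = (T.filter (fun c => c ∈ N w)).card := by
      simp only [hp]
      congr 1
      ext c
      simp only [Finset.mem_filter, hT, Finset.mem_inter]
      tauto
    have hpu : p v u = (T.filter (fun c => c ∈ N u)).card := by
      simp only [hp]
      congr 1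
      ext c
      simp only [Finset.mem_filter, hT, Finset.mem_inter]
      tauto
    rw [hpw, hpu, ← hfilter_eq]
    exact hadd
  -- extract the three vertices
  obtain ⟨x, y, z, hxy, hxz, hyz, hVxyz⟩ := Finset.card_eq_three.mp hV
  have hx : x ∈ V := by rw [hVxyz]; simp
  have hy : y ∈ V := by rw [hVxyz]; simp
  have hz : z ∈ V := by rw [hVxyz]; simp
  have e1 := key x hx y hy z hz hxy hxz hyz
  have e2 := key y hy x hx z hz (Ne.symm hxy) hyz hxz
  have e3 := key z hz x hx y hy (Ne.symm hxz) (Ne.symm hyz) hxy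
  rw [psymm y x] at e2
  rw [psymm z x, psymm z y] at e3
  have pxy : p x y = 1 := by omega
  have pxz : p x z = 1 := by omega
  have pyz : p y z = 1 := by omega
  refine ⟨fun v hv => ⟨hvE v hv, hvO v hv⟩, hEcard, hEdeg, ?_⟩
  intro v hv w hw hvw
  have hpv : p v w = 1 := by
    rw [hVxyz] at hv hw
    simp only [Finset.mem_insert, Finset.mem_singleton] at hv hw
    rcases hv with rfl | rfl | rfl <;> rcases hw with rfl | rfl | rfl <;>
      first
        | exact absurd rfl hvw
        | assumption
        | (rw [psymm]; assumption)
  obtain ⟨c, hc⟩ := Finset.card_eq_one.mp hpv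
  refine ⟨c, ?_, ?_⟩
  · have : c ∈ E.filter fun c => c ∈ N v ∧ c ∈ N w := by
      rw [hc]; exact Finset.mem_singleton_self c
    simpa using Finset.mem_filter.mp this
  · intro c' hc'
    have : c' ∈ E.filter fun c => c ∈ N v ∧ c ∈ N w :=
      Finset.mem_filter.mpr ⟨hc'.1, hc'.2⟩
    rw [hc] at this
    exact Finset.mem_singleton.mp this
end
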